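/- One-step distance estimate near an invariant orthonormal frame (Lemma 4.6, one-step form): Let H be an n×n real symmetric matrix with σ_max(H) ≤ M, let α ≥ 1, and let V be an n×N real matrix with Vᵀ·V = I_N whose column span is H-invariant, i.e. H·V = V·(Vᵀ·H·V). Let U, Ũ, Û, U' be n×N real matrices and s ≥ 0 satisfy Û = U − s·𝒜_Ũ·Ũ, Ũ = (U + Û)/2, and U' = Û − s·H·Û·(I_N − Ûᵀ·Û). Assume σ_max(U) ≤ α and σ_max(Ũ) ≤ α. Then ‖U' − V‖_F ≤ (1 + s·M·α·(α + 1))·‖U − V‖_F + 6·s·α²·M·‖Ũ − V‖_F. -/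

import Mathlib

/-!
The predictor is a midpoint step along the skew-symmetric generator 𝒜_Ũ, so it preserves the
Gram matrix: ÛᵀÛ = UᵀU. Hence σ_max(Û) ≤ α, and the corrector factor
I − ÛᵀÛ = I − UᵀU = Vᵀ(V − U) + (V − U)ᵀU is linear in U − V. Invariance of the span of V makes
H commute with the projector VVᵀ, so 𝒜_V·V = 0 and 𝒜_Ũ·Ũ splits into four terms, each linear in
Ũ − V. The bound ‖AB‖_F ≤ σ_max(A)‖B‖_F then gives ‖𝒜_Ũ·Ũ‖_F ≤ 2Mα(α + 1)‖Ũ − V‖_F and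
‖HÛ(I − ÛᵀÛ)‖_F ≤ Mα(α + 1)‖U − V‖_F, and 2α(α + 1) ≤ 6α² for α ≥ 1.
-/

open Matrix

noncomputable section

/-- The skew-symmetric commutator 𝒜_W = H·W·Wᵀ − W·Wᵀ·H. -/
def commA {n N : ℕ} (H : Matrix (Fin n) (Fin n) ℝ) (W : Matrix (Fin n) (Fin N) ℝ) :
    Matrix (Fin n) (Fin n) ℝ :=
  H * W * Wᵀ - W * Wᵀ * H

/-- Frobenius norm of a real matrix. -/
def frobNorm {m k : ℕ} (A : Matrix (Fin m) (Fin k) ℝ) : ℝ :=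
  Real.sqrt (∑ i, ∑ j, (A i j) ^ 2)

/-- Largest singular value (ℓ²-operator norm) of a real matrix. -/
def sigmaMax {m k : ℕ} (A : Matrix (Fin m) (Fin k) ℝ) : ℝ :=
  ‖LinearMap.toContinuousLinearMap (Matrix.toEuclideanLin A)‖

section OperatorNorm
open scoped Matrix.Norms.L2Operator
variable {m k l : ℕ}

lemma sigmaMax_eq_l2_opNorm (A : Matrix (Fin m) (Fin k) ℝ) : sigmaMax A = ‖A‖ := rfl

lemma sigmaMax_nonneg (A : Matrix (Fin m) (Fin k) ℝ) : 0 ≤ sigmaMax A := norm_nonneg _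

lemma sigmaMax_mul_le (A : Matrix (Fin m) (Fin k) ℝ) (B : Matrix (Fin k) (Fin l) ℝ) :
    sigmaMax (A * B) ≤ sigmaMax A * sigmaMax B :=
  A.l2_opNorm_mul B

lemma sigmaMax_transpose (A : Matrix (Fin m) (Fin k) ℝ) : sigmaMax Aᵀ = sigmaMax A := by
  simpa only [sigmaMax_eq_l2_opNorm, conjTranspose_eq_transpose_of_trivial]
    using A.l2_opNorm_conjTranspose

lemma sigmaMax_transpose_mul_self (A : Matrix (Fin m) (Fin k) ℝ) :
    sigmaMax (Aᵀ * A) = sigmaMax A * sigmaMax A := by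
  simpa only [sigmaMax_eq_l2_opNorm, conjTranspose_eq_transpose_of_trivial]
    using A.l2_opNorm_conjTranspose_mul_self

lemma sigmaMax_eq_of_transpose_mul_self_eq {A B : Matrix (Fin m) (Fin k) ℝ}
    (h : Aᵀ * A = Bᵀ * B) : sigmaMax A = sigmaMax B := by
  have := sigmaMax_transpose_mul_self A
  rw [h, sigmaMax_transpose_mul_self] at this
  exact (mul_self_inj (sigmaMax_nonneg A) (sigmaMax_nonneg B)).mp this.symm

lemma sigmaMax_one_le : sigmaMax (1 : Matrix (Fin k) (Fin k) ℝ) ≤ 1 := by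
  rw [sigmaMax_eq_l2_opNorm, cstar_norm_def, map_one]
  exact ContinuousLinearMap.norm_id_le

lemma sigmaMax_le_one_of_transpose_mul_self_eq_one {V : Matrix (Fin m) (Fin k) ℝ}
    (hV : Vᵀ * V = 1) : sigmaMax V ≤ 1 := by
  have := sigmaMax_transpose_mul_self V
  rw [hV] at this
  nlinarith [sigmaMax_one_le (k := k), sigmaMax_nonneg V]

lemma sigmaMax_transpose_mul_le (A : Matrix (Fin k) (Fin m) ℝ) (B : Matrix (Fin k) (Fin l) ℝ) :
    sigmaMax (Aᵀ * B) ≤ sigmaMax A * sigmaMax B :=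
  (sigmaMax_mul_le Aᵀ B).trans_eq <| by rw [sigmaMax_transpose]

lemma sum_sq_mulVec_le (A : Matrix (Fin m) (Fin k) ℝ) (v : Fin k → ℝ) :
    ∑ i, (A *ᵥ v) i ^ 2 ≤ sigmaMax A ^ 2 * ∑ j, v j ^ 2 := by
  have h := A.l2_opNorm_mulVec (WithLp.toLp 2 v)
  have h2 := pow_le_pow_left₀ (norm_nonneg _) h 2
  rw [sigmaMax_eq_l2_opNorm]
  simpa [mul_pow, EuclideanSpace.norm_sq_eq] using h2

end OperatorNorm

section Frobenius
attribute [local instance] Matrix.frobeniusNormedAddCommGroup Matrix.frobeniusNormedSpace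
variable {m k : ℕ}

lemma frobNorm_eq_norm (A : Matrix (Fin m) (Fin k) ℝ) : frobNorm A = ‖A‖ := by
  rw [frobNorm, frobenius_norm_def, Real.sqrt_eq_rpow]
  simp [Real.norm_eq_abs, sq_abs]

lemma frobNorm_nonneg (A : Matrix (Fin m) (Fin k) ℝ) : 0 ≤ frobNorm A := Real.sqrt_nonneg _

lemma frobNorm_add_le (A B : Matrix (Fin m) (Fin k) ℝ) :
    frobNorm (A + B) ≤ frobNorm A + frobNorm B := by
  simpa only [frobNorm_eq_norm] using norm_add_le A B

lemma frobNorm_sub_le (A B : Matrix (Fin m) (Fin k) ℝ) :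
    frobNorm (A - B) ≤ frobNorm A + frobNorm B := by
  simpa only [frobNorm_eq_norm] using norm_sub_le A B

lemma frobNorm_sub_comm (A B : Matrix (Fin m) (Fin k) ℝ) :
    frobNorm (A - B) = frobNorm (B - A) := by
  simpa only [frobNorm_eq_norm] using norm_sub_rev A B

lemma frobNorm_smul (c : ℝ) (A : Matrix (Fin m) (Fin k) ℝ) :
    frobNorm (c • A) = |c| * frobNorm A := by
  simp only [frobNorm_eq_norm, norm_smul, Real.norm_eq_abs]

lemma frobNorm_transpose (A : Matrix (Fin m) (Fin k) ℝ) : frobNorm Aᵀ = frobNorm A := by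
  simp only [frobNorm_eq_norm, frobenius_norm_transpose]

end Frobenius

section MixedBounds
variable {m k l : ℕ}

lemma frobNorm_mul_le_sigmaMax_mul (A : Matrix (Fin m) (Fin k) ℝ) (B : Matrix (Fin k) (Fin l) ℝ) :
    frobNorm (A * B) ≤ sigmaMax A * frobNorm B := by
  have hcol : ∀ j, ∑ i, (A * B) i j ^ 2 ≤ sigmaMax A ^ 2 * ∑ i, B i j ^ 2 := fun j =>
    sum_sq_mulVec_le A (fun i => B i j)
  rw [frobNorm, frobNorm, Finset.sum_comm, Finset.sum_comm (f := fun i j => B i j ^ 2),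
    ← Real.sqrt_sq (sigmaMax_nonneg A), ← Real.sqrt_mul (sq_nonneg _), Finset.mul_sum]
  exact Real.sqrt_le_sqrt (Finset.sum_le_sum fun j _ => hcol j)

lemma frobNorm_mul_le_mul_sigmaMax (A : Matrix (Fin m) (Fin k) ℝ) (B : Matrix (Fin k) (Fin l) ℝ) :
    frobNorm (A * B) ≤ frobNorm A * sigmaMax B := by
  rw [← frobNorm_transpose, transpose_mul, mul_comm, ← frobNorm_transpose A, ← sigmaMax_transpose B]
  exact frobNorm_mul_le_sigmaMax_mul Bᵀ Aᵀ

lemma frobNorm_mul_mul_le {p : ℕ} (A : Matrix (Fin m) (Fin k) ℝ) (B : Matrix (Fin k) (Fin l) ℝ)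
    (C : Matrix (Fin l) (Fin p) ℝ) :
    frobNorm (A * B * C) ≤ sigmaMax A * frobNorm B * sigmaMax C :=
  (frobNorm_mul_le_mul_sigmaMax _ C).trans <| by
    gcongr
    · exact sigmaMax_nonneg C
    · exact frobNorm_mul_le_sigmaMax_mul A B

end MixedBounds

section Algebra
variable {m n : Type*} [Fintype m] {R : Type*} [CommRing R]

lemma commute_mul_transpose_of_isSymm [Fintype n] {H : Matrix m m R} (hH : H.IsSymm)
    {V : Matrix m n R} (hinv : H * V = V * (Vᵀ * H * V)) : Commute H (V * Vᵀ) := by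
  have hsymm : (H * V * Vᵀ)ᵀ = H * V * Vᵀ := by
    rw [hinv]
    simp only [transpose_mul, transpose_transpose, hH.eq, Matrix.mul_assoc]
  calc H * (V * Vᵀ) = (H * V * Vᵀ)ᵀ := by rw [hsymm, Matrix.mul_assoc]
    _ = V * Vᵀ * H := by
      rw [transpose_mul, transpose_mul, transpose_transpose, hH.eq, Matrix.mul_assoc]

lemma one_sub_transpose_mul_self_eq [DecidableEq n] {V : Matrix m n R} (hV : Vᵀ * V = 1)
    (U : Matrix m n R) : 1 - Uᵀ * U = Vᵀ * (V - U) + (V - U)ᵀ * U := by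
  rw [transpose_sub, Matrix.mul_sub, Matrix.sub_mul, hV]
  abel

end Algebra

lemma transpose_mul_self_eq_of_skew_midpoint {m n : Type*} [Fintype m] [Fintype n]
    {A : Matrix m m ℝ} (hA : Aᵀ = -A) {U Ut Uhat : Matrix m n ℝ} (s : ℝ)
    (hpred : Uhat = U - s • (A * Ut)) (hmid : Ut = (1 / 2 : ℝ) • (U + Uhat)) :
    Uhatᵀ * Uhat = Uᵀ * U := by
  set D := (s / 2) • (A * Ut)
  have hU : U = Ut + D := by
    rw [hmid, hpred]; module
  have hUhat : Uhat = Ut - D := by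
    rw [hmid, hpred]; module
  have hskew : Dᵀ * Ut = -(Utᵀ * D) := by
    simp only [D, transpose_smul, transpose_mul, hA, Matrix.smul_mul, Matrix.mul_smul,
      Matrix.neg_mul, Matrix.mul_neg, smul_neg, Matrix.mul_assoc]
  rw [hUhat, hU]
  simp only [transpose_add, transpose_sub, Matrix.add_mul, Matrix.mul_add, Matrix.sub_mul,
    Matrix.mul_sub, hskew]
  abel

section Commutator
variable {n N : ℕ} {H : Matrix (Fin n) (Fin n) ℝ}

lemma commA_transpose (hH : H.IsSymm) (W : Matrix (Fin n) (Fin N) ℝ) :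
    (commA H W)ᵀ = -commA H W := by
  simp only [commA, transpose_sub, transpose_mul, transpose_transpose, hH.eq, neg_sub,
    Matrix.mul_assoc]

lemma commA_mul_self_eq {V : Matrix (Fin n) (Fin N) ℝ} (hc : Commute H (V * Vᵀ))
    (W : Matrix (Fin n) (Fin N) ℝ) :
    commA H W * W = H * (W - V) * (Wᵀ * W) + H * V * (W - V)ᵀ * W
      - (W - V) * (Wᵀ * (H * W)) - V * (W - V)ᵀ * (H * W) := by
  have hcW : H * (V * (Vᵀ * W)) = V * (Vᵀ * (H * W)) := by
    simpa only [Matrix.mul_assoc] using congrArg (· * W) hc.eq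
  simp only [commA, transpose_sub, Matrix.sub_mul, Matrix.mul_sub, Matrix.mul_assoc, hcW]
  abel

lemma frobNorm_commA_mul_self_le {V : Matrix (Fin n) (Fin N) ℝ} (hc : Commute H (V * Vᵀ))
    (hV : sigmaMax V ≤ 1) {W : Matrix (Fin n) (Fin N) ℝ} {M α : ℝ} (hHM : sigmaMax H ≤ M)
    (hWα : sigmaMax W ≤ α) :
    frobNorm (commA H W * W) ≤ 2 * M * α * (α + 1) * frobNorm (W - V) := by
  have hH0 := sigmaMax_nonneg H
  have hW0 := sigmaMax_nonneg W
  have hE0 := frobNorm_nonneg (W - V)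
  have hM0 := hH0.trans hHM
  have hα0 := hW0.trans hWα
  have hHW : sigmaMax (H * W) ≤ sigmaMax H * sigmaMax W := sigmaMax_mul_le H W
  have hHV : sigmaMax (H * V) ≤ sigmaMax H * 1 :=
    (sigmaMax_mul_le H V).trans (by gcongr)
  have hWHW : sigmaMax (Wᵀ * (H * W)) ≤ sigmaMax W * (sigmaMax H * sigmaMax W) :=
    (sigmaMax_transpose_mul_le W _).trans (by gcongr)
  rw [commA_mul_self_eq hc W]
  calc _ ≤ frobNorm (H * (W - V) * (Wᵀ * W)) + frobNorm (H * V * (W - V)ᵀ * W)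
        + frobNorm ((W - V) * (Wᵀ * (H * W))) + frobNorm (V * (W - V)ᵀ * (H * W)) := by
        grw [frobNorm_sub_le, frobNorm_sub_le, frobNorm_add_le]
    _ ≤ sigmaMax H * frobNorm (W - V) * (sigmaMax W * sigmaMax W)
        + sigmaMax H * 1 * frobNorm (W - V) * sigmaMax W
        + frobNorm (W - V) * (sigmaMax W * (sigmaMax H * sigmaMax W))
        + 1 * frobNorm (W - V) * (sigmaMax H * sigmaMax W) := by
      gcongr ?_ + ?_ + ?_ + ?_
      · exact (frobNorm_mul_mul_le _ _ _).trans (by gcongr; exact sigmaMax_transpose_mul_le W W)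
      · exact (frobNorm_mul_mul_le _ _ _).trans (by rw [frobNorm_transpose]; gcongr)
      · exact (frobNorm_mul_le_mul_sigmaMax _ _).trans (by gcongr)
      · exact (frobNorm_mul_mul_le _ _ _).trans
          (by rw [frobNorm_transpose]; gcongr; exact sigmaMax_nonneg _)
    _ = 2 * sigmaMax H * sigmaMax W * (sigmaMax W + 1) * frobNorm (W - V) := by ring
    _ ≤ _ := by gcongr

end Commutator

lemma frobNorm_mul_one_sub_transpose_mul_self_le {n N p : ℕ} {V : Matrix (Fin n) (Fin N) ℝ}
    (hV : Vᵀ * V = 1) {X : Matrix (Fin p) (Fin N) ℝ} {U : Matrix (Fin n) (Fin N) ℝ} {c α : ℝ}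
    (hXc : sigmaMax X ≤ c) (hUα : sigmaMax U ≤ α) :
    frobNorm (X * (1 - Uᵀ * U)) ≤ c * (1 + α) * frobNorm (U - V) := by
  have hX0 := sigmaMax_nonneg X
  have hc0 := hX0.trans hXc
  have hU0 := sigmaMax_nonneg U
  have hE0 := frobNorm_nonneg (U - V)
  rw [one_sub_transpose_mul_self_eq hV, Matrix.mul_add]
  calc _ ≤ sigmaMax X * frobNorm (Vᵀ * (V - U)) + sigmaMax X * frobNorm ((V - U)ᵀ * U) :=
        (frobNorm_add_le _ _).trans
          (add_le_add (frobNorm_mul_le_sigmaMax_mul _ _) (frobNorm_mul_le_sigmaMax_mul _ _))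
    _ ≤ sigmaMax X * (1 * frobNorm (U - V)) + sigmaMax X * (frobNorm (U - V) * sigmaMax U) := by
      grw [frobNorm_mul_le_sigmaMax_mul Vᵀ, frobNorm_mul_le_mul_sigmaMax _ U]
      rw [sigmaMax_transpose, frobNorm_transpose, frobNorm_sub_comm V U]
      grw [sigmaMax_le_one_of_transpose_mul_self_eq_one hV]
    _ = sigmaMax X * (1 + sigmaMax U) * frobNorm (U - V) := by ring
    _ ≤ _ := by gcongr

lemma frobNorm_sub_smul_sub_smul_le {m k : ℕ} (A P Q : Matrix (Fin m) (Fin k) ℝ) {s : ℝ}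
    (hs : 0 ≤ s) : frobNorm (A - s • P - s • Q) ≤ frobNorm A + s * frobNorm P + s * frobNorm Q := by
  grw [frobNorm_sub_le, frobNorm_sub_le, frobNorm_smul, frobNorm_smul, abs_of_nonneg hs]

/-- One-step distance estimate near an invariant orthonormal frame (Lemma 4.6). -/
theorem one_step_distance_estimate
    {n N : ℕ} (H : Matrix (Fin n) (Fin n) ℝ) (hH : H.IsSymm)
    (M α : ℝ) (hM : sigmaMax H ≤ M) (hα : 1 ≤ α)
    (V : Matrix (Fin n) (Fin N) ℝ) (hV : Vᵀ * V = 1)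
    (hinv : H * V = V * (Vᵀ * H * V))
    (U Ut Uhat U' : Matrix (Fin n) (Fin N) ℝ) (s : ℝ) (hs : 0 ≤ s)
    (hpred : Uhat = U - s • (commA H Ut * Ut))
    (hmid : Ut = (1 / 2 : ℝ) • (U + Uhat))
    (hcorr : U' = Uhat - s • (H * Uhat * (1 - Uhatᵀ * Uhat)))
    (hU : sigmaMax U ≤ α) (hUt : sigmaMax Ut ≤ α) :
    frobNorm (U' - V)
      ≤ (1 + s * M * α * (α + 1)) * frobNorm (U - V) + 6 * s * α ^ 2 * M * frobNorm (Ut - V) := by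
  have hM0 : 0 ≤ M := (sigmaMax_nonneg H).trans hM
  have hgram : Uhatᵀ * Uhat = Uᵀ * U :=
    transpose_mul_self_eq_of_skew_midpoint (commA_transpose hH Ut) s hpred hmid
  have hUhat : sigmaMax Uhat ≤ α := (sigmaMax_eq_of_transpose_mul_self_eq hgram).trans_le hU
  have hpredictor := frobNorm_commA_mul_self_le (commute_mul_transpose_of_isSymm hH hinv)
    (sigmaMax_le_one_of_transpose_mul_self_eq_one hV) hM hUt
  have hcorrector := frobNorm_mul_one_sub_transpose_mul_self_le hV
    ((sigmaMax_mul_le H Uhat).trans (mul_le_mul hM hUhat (sigmaMax_nonneg Uhat) hM0)) hU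
  have hsplit : U' - V = (U - V) - s • (commA H Ut * Ut) - s • (H * Uhat * (1 - Uᵀ * U)) := by
    rw [hcorr, hgram, hpred]; abel
  have hα' : 2 * α * (α + 1) ≤ 6 * α ^ 2 := by nlinarith
  have hEt0 := frobNorm_nonneg (Ut - V)
  calc frobNorm (U' - V)
      ≤ frobNorm (U - V) + s * (2 * M * α * (α + 1) * frobNorm (Ut - V))
        + s * (M * α * (1 + α) * frobNorm (U - V)) := by
        grw [hsplit, frobNorm_sub_smul_sub_smul_le _ _ _ hs, hpredictor, hcorrector]
    _ = (1 + s * M * α * (α + 1)) * frobNorm (U - V)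
        + s * M * frobNorm (Ut - V) * (2 * α * (α + 1)) := by ring
    _ ≤ (1 + s * M * α * (α + 1)) * frobNorm (U - V)
        + s * M * frobNorm (Ut - V) * (6 * α ^ 2) := by gcongr
    _ = _ := by ring
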